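/- arXiv:0908.0137 — 2 statements merged into one kernel-verified Lean document; each statement's English description precedes it below -/
import Mathlib

section
/- Let M be an n×n real symmetric matrix with simple (pairwise distinct) eigenvalues, let S = M + E with E symmetric, and fix k. Let (λ_k, u_k) be the k-th eigenpair of M with ‖u_k‖₂ = 1 and (λ_k(S), v_k) the k-th eigenpair of S, with v_k normalized so that v_k^T u_k = 1. Let R_k = Σ_{j≠k} (λ_j − λ_k)^{-1} u_j u_j^T be the reduced resolvent of M at λ_k, let Δ_k = R_k(E − (λ_k(S) − λ_k)·Id), and let d_k be the distance from λ_k to the nearest other eigenvalue of M. If ‖E‖₂ < d_k/2, then for every integer j ≥ 0: ‖ v_k − u_k + (Σ_{m=0}^{j} (−1)^m Δ_k^m) R_k E u_k ‖₂ ≤ (1/2)·(2‖E‖₂/d_k)^{j+2} · 1/(1 − 2‖E‖₂/d_k). -/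
open MeasureTheory ProbabilityTheory Filter Matrix
open scoped ENNReal NNReal BigOperators

/-- The spectral norm (largest singular value) of a real matrix, i.e. the operator norm
of the induced map between Euclidean spaces. -/
noncomputable def matSpectralNorm {m n : Type*} [Fintype m] [Fintype n] [DecidableEq n]
    (A : Matrix m n ℝ) : ℝ :=
  ‖LinearMap.toContinuousLinearMap (Matrix.toEuclideanLin A)‖

/-- The Euclidean norm of a vector. -/
noncomputable def euclNorm {n : Type*} [Fintype n] (x : n → ℝ) : ℝ :=
  Real.sqrt (∑ i, x i ^ 2)

/-- The sup norm `max_{i,j} |A i j|` of a matrix. -/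
noncomputable def supNorm {m n : Type*} [Fintype m] [Fintype n] (A : Matrix m n ℝ) : ℝ :=
  ‖(fun i j => A i j : m → n → ℝ)‖

/-- An `m × m` Bernoulli-type symmetric random matrix with parameter `p`: the
on-or-above-diagonal entries are independent, equal to `√((1-p)/p)` with probability `p`
and to `-√(p/(1-p))` with probability `1-p`. -/
def IsBernoulliType {Ω : Type*} [MeasurableSpace Ω] (P : Measure Ω) {m : ℕ} (p : ℝ)
    (C : Ω → Matrix (Fin m) (Fin m) ℝ) : Prop :=
  (∀ ω, (C ω).IsSymm) ∧
  (∀ i j, Measurable fun ω => C ω i j) ∧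
  iIndepFun (m := fun _ : {q : Fin m × Fin m // q.1 ≤ q.2} => (inferInstance : MeasurableSpace ℝ))
    (fun q ω => C ω q.val.1 q.val.2) P ∧
  ∀ i j : Fin m, i ≤ j →
    P {ω | C ω i j = Real.sqrt ((1 - p) / p)} = ENNReal.ofReal p ∧
    P {ω | C ω i j = -Real.sqrt (p / (1 - p))} = ENNReal.ofReal (1 - p)

/-- `E` is the subsampling residual `E = S - M` of the symmetric matrix `M` with sampling
probability `p`; equivalently `E = √((1-p)/p) • (M ∘ C)` with `C` Bernoulli-type. -/
def IsSubsampleResidual {Ω : Type*} [MeasurableSpace Ω] (P : Measure Ω) {n : ℕ} (p : ℝ)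
    (M : Matrix (Fin n) (Fin n) ℝ) (E : Ω → Matrix (Fin n) (Fin n) ℝ) : Prop :=
  ∃ C : Ω → Matrix (Fin n) (Fin n) ℝ, IsBernoulliType P p C ∧
    ∀ ω, E ω = Real.sqrt ((1 - p) / p) • Matrix.hadamard M (C ω)

/-!
For `x = v - u_k`, the identity `R (M - λ_k) = Id - u_k u_kᵀ` together with `S v = λ_k(S) v` and
`vᵀ u_k = 1` gives the fixed-point equation `x + Δ x = -R E u_k`; summing the resulting geometric
series, `x + Σ_{m ≤ j} (-Δ)^m R E u_k = (-Δ)^{j+1} x`. Weyl's inequality `|λ_k(S) - λ_k| ≤ ‖E‖₂`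
and `‖R‖₂ ≤ 1/d_k` give `‖Δ‖₂ ≤ 2‖E‖₂/d_k =: q < 1`, and the fixed-point equation then bounds
`‖x‖₂ ≤ (q/2)/(1 - q)`.
-/

open scoped RealInnerProductSpace

section Weyl

variable {E : Type*} [NormedAddCommGroup E] [InnerProductSpace ℝ E]

theorem OrthonormalBasis.inner_apply_self_eq_sum {ι : Type*} [Fintype ι]
    (B : OrthonormalBasis ι ℝ E) {A : E →L[ℝ] E} {a : ι → ℝ} (hA : ∀ i, A (B i) = a i • B i)
    (x : E) : ⟪x, A x⟫ = ∑ i, a i * ⟪B i, x⟫ ^ 2 := by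
  have hAx : A x = ∑ i, (⟪B i, x⟫ * a i) • B i := by
    conv_lhs => rw [← B.sum_repr' x]
    simp only [map_sum, map_smul, hA, smul_smul]
  simp only [hAx, inner_sum, inner_smul_right, real_inner_comm x]
  congr with i
  ring

theorem OrthonormalBasis.norm_sq_eq_sum {ι : Type*} [Fintype ι]
    (B : OrthonormalBasis ι ℝ E) (x : E) : ‖x‖ ^ 2 = ∑ i, ⟪B i, x⟫ ^ 2 := by
  simpa using B.inner_apply_self_eq_sum (A := ContinuousLinearMap.id ℝ E) (a := 1)
    (fun i => (one_smul ℝ (B i)).symm) x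

theorem OrthonormalBasis.inner_eq_zero_of_mem_span_image {ι : Type*} [Fintype ι]
    (B : OrthonormalBasis ι ℝ E) {s : Set ι} {i : ι} (hi : i ∉ s) {x : E}
    (hx : x ∈ Submodule.span ℝ (B '' s)) : ⟪B i, x⟫ = 0 := by
  refine Submodule.mem_orthogonal_singleton_iff_inner_right.1 (Submodule.span_le.2 ?_ hx)
  rintro _ ⟨j, hj, rfl⟩
  exact Submodule.mem_orthogonal_singleton_iff_inner_right.2
    (B.orthonormal.2 fun h => hi (h ▸ hj))

theorem OrthonormalBasis.inner_apply_self_le_of_mem_span_image {ι : Type*} [Fintype ι]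
    (B : OrthonormalBasis ι ℝ E) {A : E →L[ℝ] E} {a : ι → ℝ} (hA : ∀ i, A (B i) = a i • B i)
    {s : Set ι} {c : ℝ} (hs : ∀ i ∈ s, a i ≤ c) {x : E} (hx : x ∈ Submodule.span ℝ (B '' s)) :
    ⟪x, A x⟫ ≤ c * ‖x‖ ^ 2 := by
  rw [B.inner_apply_self_eq_sum hA, B.norm_sq_eq_sum, Finset.mul_sum]
  refine Finset.sum_le_sum fun i _ => ?_
  by_cases hi : i ∈ s
  · exact mul_le_mul_of_nonneg_right (hs i hi) (sq_nonneg _)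
  · simp [B.inner_eq_zero_of_mem_span_image hi hx]

theorem OrthonormalBasis.le_inner_apply_self_of_mem_span_image {ι : Type*} [Fintype ι]
    (B : OrthonormalBasis ι ℝ E) {A : E →L[ℝ] E} {a : ι → ℝ} (hA : ∀ i, A (B i) = a i • B i)
    {s : Set ι} {c : ℝ} (hs : ∀ i ∈ s, c ≤ a i) {x : E} (hx : x ∈ Submodule.span ℝ (B '' s)) :
    c * ‖x‖ ^ 2 ≤ ⟪x, A x⟫ := by
  have := B.inner_apply_self_le_of_mem_span_image (A := -A) (a := -a)
    (fun i => by simp [hA]) (c := -c) (fun i hi => neg_le_neg (hs i hi)) hx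
  rw [_root_.neg_apply, inner_neg_right] at this
  linarith

theorem OrthonormalBasis.finrank_span_image {ι : Type*} [Fintype ι]
    (B : OrthonormalBasis ι ℝ E) (s : Finset ι) :
    Module.finrank ℝ (Submodule.span ℝ (B '' s)) = s.card := by
  rw [Set.image_eq_range]
  exact (finrank_span_eq_card (B.orthonormal.linearIndependent.comp ((↑) : s → ι)
    Subtype.val_injective)).trans (Fintype.card_coe s)

/-- Courant–Fischer: the span of the first `k + 1` eigenvectors of `A` meets the span of the last
`n - k` eigenvectors of `A'`, and a common unit vector compares the two Rayleigh quotients. -/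
theorem eigenvalue_le_add_opNorm_sub [FiniteDimensional ℝ E] {n : ℕ} {A A' : E →L[ℝ] E}
    {B C : OrthonormalBasis (Fin n) ℝ E} {a b : Fin n → ℝ} (ha : Antitone a) (hb : Antitone b)
    (hA : ∀ i, A (B i) = a i • B i) (hA' : ∀ i, A' (C i) = b i • C i) (k : Fin n) :
    a k ≤ b k + ‖A - A'‖ := by
  set V := Submodule.span ℝ (B '' (Finset.Iic k : Set (Fin n)))
  set W := Submodule.span ℝ (C '' (Finset.Ici k : Set (Fin n)))
  have hdim : Module.finrank ℝ E < Module.finrank ℝ V + Module.finrank ℝ W := by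
    rw [B.finrank_span_image, C.finrank_span_image, Fin.card_Iic, Fin.card_Ici,
      Module.finrank_eq_card_basis B.toBasis, Fintype.card_fin]
    omega
  obtain ⟨x, hxV, hxW, hx⟩ : ∃ x ∈ V, x ∈ W ∧ x ≠ 0 := by
    by_contra! h
    exact hdim.not_ge (Submodule.finrank_add_finrank_le_of_disjoint
      (Submodule.disjoint_def.2 fun x hxV hxW => h x hxV hxW))
  have hAx : a k * ‖x‖ ^ 2 ≤ ⟪x, A x⟫ :=
    B.le_inner_apply_self_of_mem_span_image hA (fun i hi => ha (Finset.mem_Iic.1 hi)) hxV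
  have hA'x : ⟪x, A' x⟫ ≤ b k * ‖x‖ ^ 2 :=
    C.inner_apply_self_le_of_mem_span_image hA' (fun i hi => hb (Finset.mem_Ici.1 hi)) hxW
  have hdiff : ⟪x, A x⟫ - ⟪x, A' x⟫ ≤ ‖A - A'‖ * ‖x‖ ^ 2 := by
    rw [← inner_sub_right, ← _root_.sub_apply]
    calc ⟪x, (A - A') x⟫ ≤ ‖x‖ * ‖(A - A') x‖ := real_inner_le_norm _ _
      _ ≤ ‖x‖ * (‖A - A'‖ * ‖x‖) := by gcongr; exact (A - A').le_opNorm x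
      _ = ‖A - A'‖ * ‖x‖ ^ 2 := by ring
  have hx2 : 0 < ‖x‖ ^ 2 := by positivity
  nlinarith

theorem abs_eigenvalue_sub_le_opNorm_sub [FiniteDimensional ℝ E] {n : ℕ} {A A' : E →L[ℝ] E}
    {B C : OrthonormalBasis (Fin n) ℝ E} {a b : Fin n → ℝ} (ha : Antitone a) (hb : Antitone b)
    (hA : ∀ i, A (B i) = a i • B i) (hA' : ∀ i, A' (C i) = b i • C i) (k : Fin n) :
    |a k - b k| ≤ ‖A - A'‖ := by
  have h₁ := eigenvalue_le_add_opNorm_sub ha hb hA hA' k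
  have h₂ := eigenvalue_le_add_opNorm_sub hb ha hA' hA k
  rw [norm_sub_rev] at h₂
  exact abs_sub_le_iff.2 ⟨by linarith, by linarith⟩

end Weyl

open scoped Matrix.Norms.L2Operator

namespace Matrix

variable {ι : Type*} [Fintype ι] [DecidableEq ι]

theorem of_mul_transpose_of_eq_one {u : ι → ι → ℝ}
    (hu : ∀ i j, u i ⬝ᵥ u j = if i = j then 1 else 0) : of u * (of u)ᵀ = 1 := by
  ext i j
  simpa [mul_apply, one_apply, dotProduct] using hu i j

theorem of_mem_unitaryGroup {u : ι → ι → ℝ}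
    (hu : ∀ i j, u i ⬝ᵥ u j = if i = j then 1 else 0) : of u ∈ unitaryGroup ι ℝ :=
  mem_unitaryGroup_iff.2 (of_mul_transpose_of_eq_one hu)

theorem transpose_of_mul_of_eq_one {u : ι → ι → ℝ}
    (hu : ∀ i j, u i ⬝ᵥ u j = if i = j then 1 else 0) : (of u)ᵀ * of u = 1 :=
  mul_eq_one_comm.1 (of_mul_transpose_of_eq_one hu)

theorem transpose_of_mul_diagonal_mul_of (u : ι → ι → ℝ) (c : ι → ℝ) :
    (of u)ᵀ * diagonal c * of u = ∑ i, c i • vecMulVec (u i) (u i) := by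
  ext a b
  rw [mul_apply]
  simp [mul_diagonal, sum_apply, vecMulVec_apply, mul_comm, mul_left_comm]

theorem sum_vecMulVec_self_eq_one {u : ι → ι → ℝ}
    (hu : ∀ i j, u i ⬝ᵥ u j = if i = j then 1 else 0) : ∑ i, vecMulVec (u i) (u i) = 1 := by
  simpa [diagonal_one, transpose_of_mul_of_eq_one hu] using
    (transpose_of_mul_diagonal_mul_of u 1).symm

theorem eq_transpose_of_mul_diagonal_mul_of_mulVec_eq_smul {M : Matrix ι ι ℝ} {u : ι → ι → ℝ}
    {lam : ι → ℝ} (hu : ∀ i j, u i ⬝ᵥ u j = if i = j then 1 else 0)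
    (hM : ∀ i, M *ᵥ u i = lam i • u i) :
    M = (of u)ᵀ * diagonal lam * of u := by
  have hMU : M * (of u)ᵀ = (of u)ᵀ * diagonal lam := by
    ext a i
    rw [mul_diagonal]
    simpa [mul_apply, mulVec, dotProduct, mul_comm] using congr_fun (hM i) a
  rw [← hMU, mul_assoc, transpose_of_mul_of_eq_one hu, mul_one]

theorem exists_orthonormalBasis_toLp {u : ι → ι → ℝ}
    (hu : ∀ i j, u i ⬝ᵥ u j = if i = j then 1 else 0) :
    ∃ B : OrthonormalBasis ι ℝ (EuclideanSpace ℝ ι), ∀ i, B i = WithLp.toLp 2 (u i) := by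
  have hon : Orthonormal ℝ fun i => WithLp.toLp 2 (u i) := by
    rw [orthonormal_iff_ite]
    intro i j
    simpa [EuclideanSpace.inner_toLp_toLp, dotProduct_comm] using hu i j
  have hsp := hon.linearIndependent.span_eq_top_of_card_eq_finrank'
    (by rw [finrank_euclideanSpace])
  exact ⟨OrthonormalBasis.mk hon hsp.ge, fun i => by rw [OrthonormalBasis.coe_mk]⟩

theorem abs_eigenvalue_sub_le_l2_opNorm_sub {n : ℕ} {M S : Matrix (Fin n) (Fin n) ℝ}
    {u w : Fin n → Fin n → ℝ} {lam mu : Fin n → ℝ}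
    (hu : ∀ i j, u i ⬝ᵥ u j = if i = j then 1 else 0)
    (hw : ∀ i j, w i ⬝ᵥ w j = if i = j then 1 else 0)
    (hM : ∀ i, M *ᵥ u i = lam i • u i) (hS : ∀ i, S *ᵥ w i = mu i • w i)
    (hlam : Antitone lam) (hmu : Antitone mu) (k : Fin n) :
    |mu k - lam k| ≤ ‖S - M‖ := by
  obtain ⟨B, hB⟩ := exists_orthonormalBasis_toLp hu
  obtain ⟨C, hC⟩ := exists_orthonormalBasis_toLp hw
  rw [← l2_opNorm_toEuclideanCLM, map_sub]
  refine abs_eigenvalue_sub_le_opNorm_sub (B := C) (C := B) hmu hlam (fun i => ?_) (fun i => ?_) k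
  · rw [hC, toEuclideanCLM_toLp, hS, WithLp.toLp_smul]
  · rw [hB, toEuclideanCLM_toLp, hM, WithLp.toLp_smul]

end Matrix

noncomputable def reducedResolvent {ι : Type*} [Fintype ι] [DecidableEq ι]
    (u : ι → ι → ℝ) (lam : ι → ℝ) (k : ι) : Matrix ι ι ℝ :=
  ∑ j ∈ Finset.univ.erase k, (lam j - lam k)⁻¹ • Matrix.vecMulVec (u j) (u j)

namespace reducedResolvent

variable {ι : Type*} [Fintype ι] [DecidableEq ι] {u : ι → ι → ℝ} {lam : ι → ℝ} {k : ι}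

/-- The missing `j = k` term is harmless: its coefficient is `(lam k - lam k)⁻¹ = 0⁻¹ = 0`. -/
theorem eq_transpose_of_mul_diagonal_mul_of :
    reducedResolvent u lam k = (of u)ᵀ * diagonal (fun j => (lam j - lam k)⁻¹) * of u := by
  rw [transpose_of_mul_diagonal_mul_of, reducedResolvent,
    Finset.sum_erase _ (by rw [sub_self, _root_.inv_zero, zero_smul])]

theorem mulVec_self (hu : ∀ i j, u i ⬝ᵥ u j = if i = j then 1 else 0) :
    reducedResolvent u lam k *ᵥ u k = 0 := by
  rw [reducedResolvent, sum_mulVec]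
  refine Finset.sum_eq_zero fun j hj => ?_
  rw [smul_mulVec, vecMulVec_mulVec, hu, if_neg (Finset.ne_of_mem_erase hj)]
  simp

theorem mul_sub_smul_one (hu : ∀ i j, u i ⬝ᵥ u j = if i = j then 1 else 0)
    {M : Matrix ι ι ℝ} (hM : ∀ i, M *ᵥ u i = lam i • u i) (hlam : ∀ j ≠ k, lam j ≠ lam k) :
    reducedResolvent u lam k * (M - lam k • 1) = 1 - vecMulVec (u k) (u k) := by
  have hshift : M - lam k • 1 = (of u)ᵀ * diagonal (fun j => lam j - lam k) * of u := by
    have : diagonal (fun j => lam j - lam k) = diagonal lam - lam k • 1 := by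
      ext i j
      by_cases h : i = j <;> simp [diagonal, one_apply, h]
    rw [this, Matrix.mul_sub, Matrix.sub_mul, Matrix.mul_smul, Matrix.smul_mul, mul_one,
      transpose_of_mul_of_eq_one hu, ← eq_transpose_of_mul_diagonal_mul_of_mulVec_eq_smul hu hM]
  have hcoeff : ∀ j ∈ Finset.univ.erase k, (lam j - lam k)⁻¹ * (lam j - lam k) = 1 :=
    fun j hj => inv_mul_cancel₀ (sub_ne_zero.2 (hlam j (Finset.ne_of_mem_erase hj)))
  calc reducedResolvent u lam k * (M - lam k • 1)
      = (of u)ᵀ * (diagonal (fun j => (lam j - lam k)⁻¹) * (of u * (of u)ᵀ) *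
          diagonal (fun j => lam j - lam k)) * of u := by
        rw [eq_transpose_of_mul_diagonal_mul_of, hshift]; simp only [Matrix.mul_assoc]
    _ = ∑ j, ((lam j - lam k)⁻¹ * (lam j - lam k)) • vecMulVec (u j) (u j) := by
        rw [of_mul_transpose_of_eq_one hu, mul_one, diagonal_mul_diagonal,
          transpose_of_mul_diagonal_mul_of]
    _ = ∑ j ∈ Finset.univ.erase k, vecMulVec (u j) (u j) := by
        rw [← Finset.sum_erase _ (by rw [sub_self, mul_zero, zero_smul])]
        exact Finset.sum_congr rfl fun j hj => by rw [hcoeff j hj, one_smul]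
    _ = 1 - vecMulVec (u k) (u k) := by
        rw [← sum_vecMulVec_self_eq_one hu, ← Finset.sum_erase_add _ _ (Finset.mem_univ k),
          add_sub_cancel_right]

theorem l2_opNorm_le (hu : ∀ i j, u i ⬝ᵥ u j = if i = j then 1 else 0) {d : ℝ} (hd : 0 < d)
    (hgap : ∀ j ≠ k, d ≤ |lam j - lam k|) : ‖reducedResolvent u lam k‖ ≤ d⁻¹ := by
  have hU := of_mem_unitaryGroup hu
  have hUt : (of u)ᵀ ∈ unitary (Matrix ι ι ℝ) := by
    simpa [star_eq_conjTranspose] using Unitary.star_mem hU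
  rw [eq_transpose_of_mul_diagonal_mul_of, CStarRing.norm_mul_mem_unitary _ hU,
    CStarRing.norm_mem_unitary_mul _ hUt, l2_opNorm_diagonal]
  refine (pi_norm_le_iff_of_nonneg (inv_nonneg.2 hd.le)).2 fun j => ?_
  by_cases hj : j = k
  · simp [hj, hd.le]
  · rw [norm_inv, Real.norm_eq_abs]
    exact inv_anti₀ hd (hgap j hj)

end reducedResolvent

theorem Matrix.sub_add_mulVec_sub_eq_neg_mulVec {ι : Type*} [Fintype ι] [DecidableEq ι]
    {M E S R : Matrix ι ι ℝ} {u v : ι → ℝ} {lam mu : ℝ}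
    (hR : R * (M - lam • 1) = 1 - vecMulVec u u) (hRu : R *ᵥ u = 0) (hS : S = M + E)
    (hv : S *ᵥ v = mu • v) (hvu : v ⬝ᵥ u = 1) :
    v - u + (R * (E - (mu - lam) • 1)) *ᵥ (v - u) = -((R * E) *ᵥ u) := by
  have hMv : (M - lam • 1) *ᵥ v = -((E - (mu - lam) • 1) *ᵥ v) := by
    have : M *ᵥ v = mu • v - E *ᵥ v := by rw [hS, add_mulVec] at hv; rw [← hv]; abel
    rw [sub_mulVec, sub_mulVec, this, smul_mulVec, smul_mulVec, one_mulVec]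
    module
  have hΔv : (R * (E - (mu - lam) • 1)) *ᵥ v = -(v - u) := by
    rw [← mulVec_mulVec, ← neg_neg ((E - _) *ᵥ v), ← hMv, mulVec_neg, mulVec_mulVec, hR,
      sub_mulVec, one_mulVec, vecMulVec_mulVec, dotProduct_comm, hvu]
    simp
  have hΔu : (R * (E - (mu - lam) • 1)) *ᵥ u = (R * E) *ᵥ u := by
    rw [← mulVec_mulVec, sub_mulVec, smul_mulVec, one_mulVec, mulVec_sub, mulVec_smul,
      hRu, smul_zero, sub_zero, mulVec_mulVec]
  rw [mulVec_sub, hΔv, hΔu]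
  abel

section GeometricExpansion

variable {ι : Type*} [Fintype ι]

theorem euclNorm_eq_norm_toLp (x : ι → ℝ) :
    euclNorm x = ‖(WithLp.toLp 2 x : EuclideanSpace ℝ ι)‖ := by
  simp [euclNorm, EuclideanSpace.norm_eq]

theorem euclNorm_eq_one {x : ι → ℝ} (hx : x ⬝ᵥ x = 1) : euclNorm x = 1 := by
  simp_rw [euclNorm, sq]
  rw [← dotProduct, hx, Real.sqrt_one]

theorem Matrix.add_geom_sum_mulVec_eq {R : Type*} [CommRing R] [DecidableEq ι]
    {Δ : Matrix ι ι R} {x b : ι → R} (h : x + Δ *ᵥ x = -b) (N : ℕ) :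
    x + (∑ m ∈ Finset.range N, (-Δ) ^ m) *ᵥ b = (-Δ) ^ N *ᵥ x := by
  have hb : b = -((1 + Δ) *ᵥ x) := by rw [add_mulVec, one_mulVec, h, neg_neg]
  have hgeom : (∑ m ∈ Finset.range N, (-Δ) ^ m) * (1 + Δ) = 1 - (-Δ) ^ N := by
    have := geom_sum_mul (-Δ) N
    rw [show (-Δ - 1 : Matrix ι ι R) = -(1 + Δ) by abel, Matrix.mul_neg] at this
    rw [← neg_sub, ← this, neg_neg]
  rw [hb, mulVec_neg, mulVec_mulVec, hgeom, sub_mulVec, one_mulVec]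
  abel

variable [DecidableEq ι]

theorem Matrix.l2_opNorm_one_le : ‖(1 : Matrix ι ι ℝ)‖ ≤ 1 := by
  rw [← diagonal_one, l2_opNorm_diagonal]
  exact pi_norm_le_iff_of_nonneg zero_le_one |>.2 fun _ => norm_one.le

theorem Matrix.l2_opNorm_sub_smul_one_le (A : Matrix ι ι ℝ) (c : ℝ) :
    ‖A - c • 1‖ ≤ ‖A‖ + |c| := by
  refine (norm_sub_le _ _).trans ?_
  rw [norm_smul, Real.norm_eq_abs]
  gcongr
  exact mul_le_of_le_one_right (abs_nonneg c) l2_opNorm_one_le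

theorem Matrix.l2_opNorm_pow_le (A : Matrix ι ι ℝ) (N : ℕ) : ‖A ^ N‖ ≤ ‖A‖ ^ N := by
  induction N with
  | zero => simpa using l2_opNorm_one_le
  | succ N ih =>
    rw [pow_succ, pow_succ]
    exact (l2_opNorm_mul _ _).trans (by gcongr)

theorem matSpectralNorm_eq_l2_opNorm (A : Matrix ι ι ℝ) : matSpectralNorm A = ‖A‖ := rfl

theorem euclNorm_mulVec_le (A : Matrix ι ι ℝ) (x : ι → ℝ) :
    euclNorm (A *ᵥ x) ≤ ‖A‖ * euclNorm x := by
  simpa [euclNorm_eq_norm_toLp] using A.l2_opNorm_mulVec (WithLp.toLp 2 x)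

theorem euclNorm_le_of_add_mulVec_eq {Δ : Matrix ι ι ℝ} {x b : ι → ℝ} (h : x + Δ *ᵥ x = -b)
    {q : ℝ} (hΔ : ‖Δ‖ ≤ q) (hq : q < 1) : euclNorm x ≤ euclNorm b * (1 - q)⁻¹ := by
  have hx : euclNorm x ≤ euclNorm b + q * euclNorm x := by
    have hxb : x = -b - Δ *ᵥ x := by rw [← h]; abel
    calc euclNorm x = ‖(WithLp.toLp 2 (-b) : EuclideanSpace ℝ ι) - WithLp.toLp 2 (Δ *ᵥ x)‖ := by
          rw [euclNorm_eq_norm_toLp, ← WithLp.toLp_sub, ← hxb]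
      _ ≤ euclNorm b + ‖Δ‖ * euclNorm x := by
          refine (norm_sub_le _ _).trans (add_le_add ?_ ?_)
          · rw [WithLp.toLp_neg, norm_neg, euclNorm_eq_norm_toLp]
          · rw [← euclNorm_eq_norm_toLp]; exact euclNorm_mulVec_le Δ x
      _ ≤ euclNorm b + q * euclNorm x := by
          gcongr
          exact Real.sqrt_nonneg _
  rw [le_mul_inv_iff₀ (sub_pos.2 hq)]
  linarith

theorem euclNorm_add_geom_sum_mulVec_le {Δ : Matrix ι ι ℝ} {x b : ι → ℝ}
    (h : x + Δ *ᵥ x = -b) {q : ℝ} (hΔ : ‖Δ‖ ≤ q) (hq : q < 1) (N : ℕ) :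
    euclNorm (x + (∑ m ∈ Finset.range N, (-1 : ℝ) ^ m • Δ ^ m) *ᵥ b) ≤
      q ^ N * euclNorm b * (1 - q)⁻¹ := by
  simp_rw [← smul_pow, neg_one_smul]
  rw [add_geom_sum_mulVec_eq h, mul_assoc]
  calc euclNorm ((-Δ) ^ N *ᵥ x) ≤ ‖(-Δ) ^ N‖ * euclNorm x := euclNorm_mulVec_le _ _
    _ ≤ q ^ N * (euclNorm b * (1 - q)⁻¹) := by
        refine mul_le_mul ?_ (euclNorm_le_of_add_mulVec_eq h hΔ hq) ?_ ?_
        · exact (l2_opNorm_pow_le _ N).trans (by rw [norm_neg]; gcongr)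
        · exact Real.sqrt_nonneg _
        · exact pow_nonneg ((norm_nonneg Δ).trans hΔ) N

end GeometricExpansion

theorem eigenvector_perturbation_expansion_bound_general
    {n : ℕ} (M E S : Matrix (Fin n) (Fin n) ℝ)
    (lam : Fin n → ℝ) (u : Fin n → Fin n → ℝ) (k : Fin n)
    (muS : Fin n → ℝ) (w : Fin n → Fin n → ℝ)
    (lamS : ℝ) (v : Fin n → ℝ) (d : ℝ)
    (R Δ : Matrix (Fin n) (Fin n) ℝ)
    (hS : S = M + E)
    -- orthonormal eigenbasis of `M`, simple eigenvalues listed in decreasing order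
    (horth : ∀ i j : Fin n, ∑ l, u i l * u j l = if i = j then 1 else 0)
    (heig : ∀ i, M.mulVec (u i) = lam i • u i)
    (hsorted : StrictAnti lam)
    -- `(muS k, v)` is the `k`-th eigenpair of `S`, `v` normalized by `vᵀ u_k = 1`
    (horthS : ∀ i j : Fin n, ∑ l, w i l * w j l = if i = j then 1 else 0)
    (heigS : ∀ i, S.mulVec (w i) = muS i • w i)
    (hsortedS : Antitone muS)
    (hlamS : lamS = muS k)
    (hv : S.mulVec v = lamS • v)
    (hnormv : ∑ l, v l * u k l = 1)
    -- `R` is the reduced resolvent of `M` at `lam k` and `Δ = R (E - (λ_k(S) - λ_k) Id)`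
    (hR : R = ∑ j ∈ Finset.univ.erase k,
      (lam j - lam k)⁻¹ • Matrix.vecMulVec (u j) (u j))
    (hΔ : Δ = R * (E - (lamS - lam k) • (1 : Matrix (Fin n) (Fin n) ℝ)))
    -- `d` is the separation distance of `lam k`
    (hd : IsLeast {x : ℝ | ∃ j, j ≠ k ∧ x = |lam j - lam k|} d)
    (hE : matSpectralNorm E < d / 2) :
    ∀ j : ℕ,
      euclNorm (v - u k +
          ((∑ m ∈ Finset.range (j + 1), ((-1 : ℝ) ^ m) • Δ ^ m) * R * E).mulVec (u k)) ≤
        (1 / 2) * (2 * matSpectralNorm E / d) ^ (j + 2) *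
          (1 - 2 * matSpectralNorm E / d)⁻¹ := by
  intro j
  change R = reducedResolvent u lam k at hR
  subst hR hΔ
  simp only [matSpectralNorm_eq_l2_opNorm] at hE ⊢
  have hinj : ∀ i ≠ k, lam i ≠ lam k := fun i hi h => hi (hsorted.injective h)
  have hgap : ∀ i ≠ k, d ≤ |lam i - lam k| := fun i hi => hd.2 ⟨i, hi, rfl⟩
  have hd0 : 0 < d := by
    obtain ⟨j₀, hj₀, rfl⟩ := hd.1
    exact abs_pos.2 (sub_ne_zero.2 (hinj j₀ hj₀))
  have hq : 2 * ‖E‖ / d < 1 := by rw [div_lt_one hd0]; linarith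
  have hweyl : |lamS - lam k| ≤ ‖E‖ := by
    simpa [hlamS, hS] using Matrix.abs_eigenvalue_sub_le_l2_opNorm_sub horth horthS heig heigS
      hsorted.antitone hsortedS k
  have hRn := reducedResolvent.l2_opNorm_le horth hd0 hgap
  have hΔn : ‖reducedResolvent u lam k * (E - (lamS - lam k) • 1)‖ ≤ 2 * ‖E‖ / d :=
    (Matrix.l2_opNorm_mul _ _).trans <| (mul_le_mul hRn
      ((Matrix.l2_opNorm_sub_smul_one_le _ _).trans (show _ ≤ 2 * ‖E‖ by linarith))
      (norm_nonneg _) (by positivity)).trans_eq (by ring)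
  have hb : euclNorm ((reducedResolvent u lam k * E) *ᵥ u k) ≤ ‖E‖ / d := by
    refine (euclNorm_mulVec_le _ _).trans ?_
    rw [euclNorm_eq_one ((horth k k).trans (if_pos rfl)), mul_one, div_eq_inv_mul]
    exact (Matrix.l2_opNorm_mul _ _).trans (by gcongr)
  have hkey := Matrix.sub_add_mulVec_sub_eq_neg_mulVec
    (reducedResolvent.mul_sub_smul_one horth heig hinj) (reducedResolvent.mulVec_self horth) hS
    hv hnormv
  rw [Matrix.mul_assoc, ← Matrix.mulVec_mulVec]
  refine (euclNorm_add_geom_sum_mulVec_le hkey hΔn hq (j + 1)).trans ?_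
  have : 0 ≤ (1 - 2 * ‖E‖ / d)⁻¹ := inv_nonneg.2 (by linarith)
  calc _ ≤ (2 * ‖E‖ / d) ^ (j + 1) * (‖E‖ / d) * (1 - 2 * ‖E‖ / d)⁻¹ := by gcongr
    _ = _ := by ring

/-- Theorem 2 of the paper: perturbation expansion of the `k`-th
eigenvector, with error bound of order `(2‖E‖₂/d_k)^{j+2}`. -/
theorem eigenvector_perturbation_expansion_bound
    {n : ℕ} (M E S : Matrix (Fin n) (Fin n) ℝ)
    (lam : Fin n → ℝ) (u : Fin n → Fin n → ℝ) (k : Fin n)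
    (muS : Fin n → ℝ) (w : Fin n → Fin n → ℝ)
    (lamS : ℝ) (v : Fin n → ℝ) (d : ℝ)
    (R Δ : Matrix (Fin n) (Fin n) ℝ)
    (hMsymm : M.IsSymm) (hEsymm : E.IsSymm) (hS : S = M + E)
    -- orthonormal eigenbasis of `M`, simple eigenvalues listed in decreasing order
    (horth : ∀ i j : Fin n, ∑ l, u i l * u j l = if i = j then 1 else 0)
    (heig : ∀ i, M.mulVec (u i) = lam i • u i)
    (hsorted : StrictAnti lam)
    -- `(muS k, v)` is the `k`-th eigenpair of `S`, `v` normalized by `vᵀ u_k = 1`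
    (horthS : ∀ i j : Fin n, ∑ l, w i l * w j l = if i = j then 1 else 0)
    (heigS : ∀ i, S.mulVec (w i) = muS i • w i)
    (hsortedS : Antitone muS)
    (hlamS : lamS = muS k)
    (hvpar : ∃ c : ℝ, v = c • w k)
    (hv : S.mulVec v = lamS • v)
    (hnormv : ∑ l, v l * u k l = 1)
    -- `R` is the reduced resolvent of `M` at `lam k` and `Δ = R (E - (λ_k(S) - λ_k) Id)`
    (hR : R = ∑ j ∈ Finset.univ.erase k,
      (lam j - lam k)⁻¹ • Matrix.vecMulVec (u j) (u j))
    (hΔ : Δ = R * (E - (lamS - lam k) • (1 : Matrix (Fin n) (Fin n) ℝ)))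
    -- `d` is the separation distance of `lam k`
    (hd : IsLeast {x : ℝ | ∃ j, j ≠ k ∧ x = |lam j - lam k|} d)
    (hE : matSpectralNorm E < d / 2) :
    ∀ j : ℕ,
      euclNorm (v - u k +
          ((∑ m ∈ Finset.range (j + 1), ((-1 : ℝ) ^ m) • Δ ^ m) * R * E).mulVec (u k)) ≤
        (1 / 2) * (2 * matSpectralNorm E / d) ^ (j + 2) *
          (1 - 2 * matSpectralNorm E / d)⁻¹ :=
  eigenvector_perturbation_expansion_bound_general M E S lam u k muS w lamS v d R Δ hS horth heig
    hsorted horthS heigS hsortedS hlamS hv hnormv hR hΔ hd hE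
end

section
/- Let M be an n×n symmetric matrix with eigenvalues λ₁ > λ₂ > … and unit leading eigenvector u₁, let E be the subsampling residual of M with sampling probability p, and let R = Σ_{j≥2} (λ_j − λ₁)^{-1} u_j u_j^T be the reduced resolvent at λ₁. Set w₁ = u₁ ∘ u₁ and 𝓜 = M ∘ M (entrywise squares). Then E[‖R E u₁‖₂²] ≤ (1/(λ₂−λ₁)²) · ((1−p)/p) · ( Σ_{k=1}^n u₁(k)² ‖M_k‖₂² − [ 2 w₁^T 𝓜 w₁ − Σ_{k=1}^n w₁(k)² 𝓜_{kk} ] ), where M_k denotes the k-th column of M. -/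
open MeasureTheory ProbabilityTheory Filter Matrix
open scoped ENNReal NNReal BigOperators

/-- The spectral norm (largest singular value) of a real matrix, i.e. the operator norm
of the induced map between Euclidean spaces. -/
noncomputable def spectralNorm' {m n : Type*} [Fintype m] [Fintype n] [DecidableEq n]
    (A : Matrix m n ℝ) : ℝ :=
  ‖LinearMap.toContinuousLinearMap (Matrix.toEuclideanLin A)‖

/-!
The reduced resolvent `R` annihilates `u₁` and has norm `1 / (λ₁ - λ₂)` on `u₁ᗮ`, so pointwise
`‖R y‖² ≤ (‖y‖² - ⟨u₁, y⟩²) / (λ₁ - λ₂)²` with `y = E u₁`. Write `E = √((1-p)/p) • (M ∘ C)`: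
the entries of `C` on and above the diagonal are independent with mean `0` and variance `1`, so
`𝔼[C i j * C k l]` is `1` when `{i, j} = {k, l}` and `0` otherwise. Both `‖E u₁‖²` and
`⟨u₁, E u₁⟩²` are quadratic in `C`, and their expectations follow from this second-moment
structure; in `⟨u₁, E u₁⟩` each off-diagonal pair occurs twice, which produces the factor `2` and
the diagonal correction.
-/

namespace Matrix

variable {ι : Type*} [Fintype ι]

theorem hadamard_mulVec_apply (M A : Matrix ι ι ℝ) (v : ι → ℝ) (k : ι) :
    ((M ⊙ A) *ᵥ v) k = ∑ l, M k l * v l * A k l := by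
  simp only [mulVec, dotProduct, hadamard_apply]
  exact Finset.sum_congr rfl fun _ _ => by ring

theorem dotProduct_hadamard_mulVec (M A : Matrix ι ι ℝ) (v : ι → ℝ) :
    v ⬝ᵥ (M ⊙ A) *ᵥ v = ∑ k, ∑ l, v k * M k l * v l * A k l := by
  simp only [dotProduct, hadamard_mulVec_apply, Finset.mul_sum]
  exact Finset.sum_congr rfl fun _ _ => Finset.sum_congr rfl fun _ _ => by ring

variable [DecidableEq ι]

theorem mulVec_dotProduct_mulVec_self {A : Matrix ι ι ℝ} (hA : Aᵀ * A = 1) (x : ι → ℝ) :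
    A *ᵥ x ⬝ᵥ A *ᵥ x = x ⬝ᵥ x := by
  rw [dotProduct_mulVec, ← vecMul_transpose, vecMul_vecMul, hA, vecMul_one]

theorem sum_smul_vecMulVec_self (g : ι → ℝ) (u : ι → ι → ℝ) :
    ∑ j, g j • vecMulVec (u j) (u j) = (of u)ᵀ * diagonal g * of u := by
  ext a b
  simp [sum_apply, mul_apply, vecMulVec_apply, diagonal_apply, mul_comm, mul_left_comm]

noncomputable def reducedResolvent (lam : ι → ℝ) (u : ι → ι → ℝ) (z : ι) : Matrix ι ι ℝ :=
  ∑ j ∈ Finset.univ.erase z, (lam j - lam z)⁻¹ • vecMulVec (u j) (u j)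

theorem reducedResolvent_eq (lam : ι → ℝ) (u : ι → ι → ℝ) (z : ι) :
    reducedResolvent lam u z =
      (of u)ᵀ * diagonal (fun j => if j = z then 0 else (lam j - lam z)⁻¹) * of u := by
  rw [← sum_smul_vecMulVec_self, reducedResolvent,
    ← Finset.add_sum_erase _ _ (Finset.mem_univ z), if_pos rfl, zero_smul, zero_add]
  exact Finset.sum_congr rfl fun j hj => by rw [if_neg (Finset.ne_of_mem_erase hj)]

variable {lam : ι → ℝ} {u : ι → ι → ℝ} {z : ι} {δ : ℝ}

theorem reducedResolvent_mulVec_dotProduct_self_le (hu : of u * (of u)ᵀ = 1) (hδ : 0 < δ)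
    (hgap : ∀ j ≠ z, δ ≤ |lam j - lam z|) (y : ι → ℝ) :
    reducedResolvent lam u z *ᵥ y ⬝ᵥ reducedResolvent lam u z *ᵥ y ≤
      (δ ^ 2)⁻¹ * (y ⬝ᵥ y - (u z ⬝ᵥ y) ^ 2) := by
  set w := of u *ᵥ y
  have hw : w ⬝ᵥ w = y ⬝ᵥ y := mulVec_dotProduct_mulVec_self (mul_eq_one_comm.1 hu) y
  have hwz : w z = u z ⬝ᵥ y := rfl
  rw [reducedResolvent_eq, ← mulVec_mulVec, ← mulVec_mulVec,
    mulVec_dotProduct_mulVec_self (by rwa [transpose_transpose]), ← hw, ← hwz]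
  simp only [dotProduct, mulVec_diagonal]
  rw [← Finset.add_sum_erase _ _ (Finset.mem_univ z),
    ← Finset.add_sum_erase _ (fun j => w j * w j) (Finset.mem_univ z), if_pos rfl, zero_mul,
    zero_mul, zero_add, ← sq, add_sub_cancel_left, Finset.mul_sum]
  refine Finset.sum_le_sum fun j hj => ?_
  have hδj : δ ^ 2 ≤ (lam j - lam z) ^ 2 := by
    simpa only [sq_abs] using pow_le_pow_left₀ hδ.le (hgap j (Finset.ne_of_mem_erase hj)) 2
  rw [if_neg (Finset.ne_of_mem_erase hj), mul_mul_mul_comm, ← sq]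
  exact mul_le_mul_of_nonneg_right ((inv_pow _ 2).trans_le <| inv_anti₀ (by positivity) hδj)
    (mul_self_nonneg _)

end Matrix

theorem euclNorm_sq {ι : Type*} [Fintype ι] (x : ι → ℝ) : euclNorm x ^ 2 = x ⬝ᵥ x := by
  rw [euclNorm, Real.sq_sqrt (Finset.sum_nonneg fun i _ => sq_nonneg (x i))]
  simp only [dotProduct, sq]

theorem of_mul_transpose_eq_one {ι : Type*} [Fintype ι] [DecidableEq ι] {u : ι → ι → ℝ}
    (hunit : ∀ i, euclNorm (u i) = 1) (horth : ∀ i j, i ≠ j → ∑ k, u i k * u j k = 0) :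
    of u * (of u)ᵀ = 1 := by
  ext i j
  rw [mul_apply, one_apply]
  split_ifs with h
  · subst h
    have h := congrArg (· ^ 2) (hunit i)
    rwa [one_pow, euclNorm_sq] at h
  · exact horth i j h

theorem euclNorm_reducedResolvent_mul_smul_mulVec_sq_le {ι : Type*} [Fintype ι] [DecidableEq ι]
    {lam : ι → ℝ} {u : ι → ι → ℝ} {z : ι} {δ : ℝ} (hu : of u * (of u)ᵀ = 1) (hδ : 0 < δ)
    (hgap : ∀ j ≠ z, δ ≤ |lam j - lam z|) (a : ℝ) (A : Matrix ι ι ℝ) :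
    euclNorm ((reducedResolvent lam u z * (a • A)) *ᵥ u z) ^ 2 ≤
      (δ ^ 2)⁻¹ * a ^ 2 * (A *ᵥ u z ⬝ᵥ A *ᵥ u z - (u z ⬝ᵥ A *ᵥ u z) ^ 2) := by
  rw [euclNorm_sq, ← mulVec_mulVec]
  refine (reducedResolvent_mulVec_dotProduct_self_le hu hδ hgap _).trans_eq ?_
  simp only [smul_mulVec, dotProduct_smul, smul_dotProduct, smul_eq_mul]
  ring

theorem StrictAnti.sub_le_abs_sub_of_ne_zero {n : ℕ} {lam : Fin n → ℝ} (h : StrictAnti lam)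
    (h1 : 1 < n) {j : Fin n} (hj : j ≠ ⟨0, by omega⟩) :
    lam ⟨0, by omega⟩ - lam ⟨1, h1⟩ ≤ |lam j - lam ⟨0, by omega⟩| := by
  have hle : lam j ≤ lam ⟨1, h1⟩ :=
    h.antitone (Fin.le_iff_val_le_val.2 (Nat.one_le_iff_ne_zero.2 fun h0 => hj (Fin.ext h0)))
  rw [le_abs]
  right
  linarith

theorem sum_mul_sum_eq_sum_sum_mul_mul {α : Type*} [Fintype α] (x y g h : α → ℝ) :
    (∑ a, x a * g a) * ∑ b, y b * h b = ∑ a, ∑ b, x a * y b * (g a * h b) := by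
  rw [Finset.sum_mul_sum]
  exact Finset.sum_congr rfl fun _ _ => Finset.sum_congr rfl fun _ _ => mul_mul_mul_comm ..

theorem sum_sum_ite_sym2_eq {ι M : Type*} [Fintype ι] [DecidableEq ι] [AddCommGroup M]
    (d : ι → ι → M) (i j : ι) :
    ∑ k, ∑ l, (if s(i, j) = s(k, l) then d k l else 0) =
      d i j + d j i - if i = j then d i j else 0 := by
  have hfilter :
      (Finset.univ.filter fun q : ι × ι => s(i, j) = s(q.1, q.2)) = {(i, j), (j, i)} := by
    ext ⟨k, l⟩
    simp only [Finset.mem_filter, Finset.mem_univ, true_and, Sym2.eq_iff, Finset.mem_insert,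
      Finset.mem_singleton, Prod.mk.injEq]
    tauto
  rw [← Fintype.sum_prod_type', Finset.sum_ite, Finset.sum_const_zero, add_zero, hfilter]
  by_cases hij : i = j
  · subst hij; simp
  · rw [Finset.sum_pair (by simp [hij])]; simp [hij]

section SecondMoments

variable {Ω : Type*} [MeasurableSpace Ω] {P : Measure Ω}

theorem integrable_sum_mul_sum {α : Type*} [Fintype α] {f : α → Ω → ℝ}
    (hf : ∀ a b, Integrable (fun ω => f a ω * f b ω) P) (x y : α → ℝ) :
    Integrable (fun ω => (∑ a, x a * f a ω) * ∑ b, y b * f b ω) P := by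
  simp_rw [sum_mul_sum_eq_sum_sum_mul_mul]
  exact integrable_finsetSum _ fun a _ => integrable_finsetSum _ fun b _ =>
    (hf a b).const_mul _

theorem integral_sum_mul_sum {α : Type*} [Fintype α] {f : α → Ω → ℝ}
    (hf : ∀ a b, Integrable (fun ω => f a ω * f b ω) P) (x y : α → ℝ) :
    ∫ ω, (∑ a, x a * f a ω) * ∑ b, y b * f b ω ∂P =
      ∑ a, ∑ b, x a * y b * ∫ ω, f a ω * f b ω ∂P := by
  simp_rw [sum_mul_sum_eq_sum_sum_mul_mul]
  rw [integral_finsetSum _ fun a _ => integrable_finsetSum _ fun b _ => (hf a b).const_mul _]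
  refine Finset.sum_congr rfl fun a _ => ?_
  rw [integral_finsetSum _ fun b _ => (hf a b).const_mul _]
  simp_rw [integral_const_mul]

structure OrthonormalSymmEntries {ι : Type*} [DecidableEq ι] (P : Measure Ω)
    (C : Ω → Matrix ι ι ℝ) : Prop where
  integrable_mul : ∀ i j k l, Integrable (fun ω => C ω i j * C ω k l) P
  integral_mul : ∀ i j k l,
    ∫ ω, C ω i j * C ω k l ∂P = if s(i, j) = s(k, l) then 1 else 0

namespace OrthonormalSymmEntries

variable {ι : Type*} [Fintype ι] [DecidableEq ι] {C : Ω → Matrix ι ι ℝ}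

theorem integrable_sq_sum_row (hC : OrthonormalSymmEntries P C) (k : ι) (c : ι → ℝ) :
    Integrable (fun ω => (∑ l, c l * C ω k l) ^ 2) P := by
  simp_rw [sq]
  exact integrable_sum_mul_sum (fun l l' => hC.integrable_mul k l k l') c c

theorem integral_sq_sum_row (hC : OrthonormalSymmEntries P C) (k : ι) (c : ι → ℝ) :
    ∫ ω, (∑ l, c l * C ω k l) ^ 2 ∂P = ∑ l, c l ^ 2 := by
  simp_rw [sq]
  rw [integral_sum_mul_sum (fun l l' => hC.integrable_mul k l k l')]
  simp only [hC.integral_mul, Sym2.congr_right, mul_ite, mul_one, mul_zero, Finset.sum_ite_eq,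
    Finset.mem_univ, if_true]

theorem integrable_sq_sum_sum (hC : OrthonormalSymmEntries P C) (d : ι → ι → ℝ) :
    Integrable (fun ω => (∑ i, ∑ j, d i j * C ω i j) ^ 2) P := by
  simp_rw [sq, ← Fintype.sum_prod_type']
  exact integrable_sum_mul_sum (fun q q' => hC.integrable_mul q.1 q.2 q'.1 q'.2) _ _

theorem integral_sq_sum_sum (hC : OrthonormalSymmEntries P C) {d : ι → ι → ℝ}
    (hd : ∀ i j, d i j = d j i) :
    ∫ ω, (∑ i, ∑ j, d i j * C ω i j) ^ 2 ∂P = 2 * ∑ i, ∑ j, d i j ^ 2 - ∑ i, d i i ^ 2 := by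
  have hexpand : ∫ ω, (∑ i, ∑ j, d i j * C ω i j) ^ 2 ∂P =
      ∑ i, ∑ j, d i j * ∑ k, ∑ l, if s(i, j) = s(k, l) then d k l else 0 := by
    simp_rw [sq, ← Fintype.sum_prod_type']
    rw [integral_sum_mul_sum fun q q' => hC.integrable_mul q.1 q.2 q'.1 q'.2]
    simp_rw [hC.integral_mul, Finset.mul_sum, mul_ite, mul_one, mul_zero]
  simp_rw [hexpand, sum_sum_ite_sym2_eq, ← hd _ _, mul_sub, Finset.sum_sub_distrib, mul_ite,
    mul_zero, Finset.sum_ite_eq, Finset.mem_univ, if_true, Finset.mul_sum]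
  congr 1
  · exact Finset.sum_congr rfl fun _ _ => Finset.sum_congr rfl fun _ _ => by ring
  · simp [sq]

theorem integrable_hadamard_mulVec_dotProduct_self (hC : OrthonormalSymmEntries P C)
    (M : Matrix ι ι ℝ) (v : ι → ℝ) :
    Integrable (fun ω => (M ⊙ C ω) *ᵥ v ⬝ᵥ (M ⊙ C ω) *ᵥ v) P := by
  simp only [dotProduct, ← sq, hadamard_mulVec_apply]
  exact integrable_finsetSum _ fun k _ => hC.integrable_sq_sum_row k _

theorem integral_hadamard_mulVec_dotProduct_self (hC : OrthonormalSymmEntries P C)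
    (M : Matrix ι ι ℝ) (v : ι → ℝ) :
    ∫ ω, (M ⊙ C ω) *ᵥ v ⬝ᵥ (M ⊙ C ω) *ᵥ v ∂P = ∑ k, v k ^ 2 * ∑ i, M i k ^ 2 := by
  simp only [dotProduct, ← sq, hadamard_mulVec_apply]
  rw [integral_finsetSum _ fun k _ => hC.integrable_sq_sum_row k _]
  simp only [hC.integral_sq_sum_row, mul_pow, Finset.mul_sum]
  rw [Finset.sum_comm]
  exact Finset.sum_congr rfl fun _ _ => Finset.sum_congr rfl fun _ _ => mul_comm _ _

theorem integrable_sq_dotProduct_hadamard_mulVec (hC : OrthonormalSymmEntries P C)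
    (M : Matrix ι ι ℝ) (v : ι → ℝ) :
    Integrable (fun ω => (v ⬝ᵥ (M ⊙ C ω) *ᵥ v) ^ 2) P := by
  simp only [dotProduct_hadamard_mulVec]
  exact hC.integrable_sq_sum_sum _

theorem integral_sq_dotProduct_hadamard_mulVec (hC : OrthonormalSymmEntries P C)
    {M : Matrix ι ι ℝ} (hM : M.IsSymm) (v : ι → ℝ) :
    ∫ ω, (v ⬝ᵥ (M ⊙ C ω) *ᵥ v) ^ 2 ∂P =
      2 * ∑ i, ∑ j, v i ^ 2 * M i j ^ 2 * v j ^ 2 - ∑ k, (v k ^ 2) ^ 2 * M k k ^ 2 := by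
  simp only [dotProduct_hadamard_mulVec]
  rw [hC.integral_sq_sum_sum fun i j => by rw [hM.apply i j]; ring]
  congr 1
  · simp only [mul_pow]
  · exact Finset.sum_congr rfl fun _ _ => by ring

end OrthonormalSymmEntries

end SecondMoments

section TwoPoint

variable {Ω : Type*} [MeasurableSpace Ω] {P : Measure Ω} [IsProbabilityMeasure P] {X : Ω → ℝ}
  {a b p : ℝ}

theorem ae_eq_or_eq_of_measure_eq_ofReal (hX : Measurable X) (hab : a ≠ b) (hp0 : 0 ≤ p)
    (hp1 : p ≤ 1) (ha : P {ω | X ω = a} = ENNReal.ofReal p)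
    (hb : P {ω | X ω = b} = ENNReal.ofReal (1 - p)) :
    ∀ᵐ ω ∂P, X ω = a ∨ X ω = b := by
  have hdisj : Disjoint {ω | X ω = a} {ω | X ω = b} :=
    Set.disjoint_left.2 fun ω h₁ h₂ => hab (h₁.symm.trans h₂)
  have hma : MeasurableSet {ω | X ω = a} := hX (measurableSet_singleton a)
  have hmb : MeasurableSet {ω | X ω = b} := hX (measurableSet_singleton b)
  refine (mem_ae_iff_prob_eq_one (hma.union hmb)).2 ?_
  rw [measure_union hdisj hmb, ha, hb, ← ENNReal.ofReal_add hp0 (by linarith)]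
  simp

theorem integral_comp_of_measure_eq_ofReal (hX : Measurable X) (hab : a ≠ b) (hp0 : 0 ≤ p)
    (hp1 : p ≤ 1) (ha : P {ω | X ω = a} = ENNReal.ofReal p)
    (hb : P {ω | X ω = b} = ENNReal.ofReal (1 - p)) (f : ℝ → ℝ) :
    ∫ ω, f (X ω) ∂P = p * f a + (1 - p) * f b := by
  have hma : MeasurableSet {ω | X ω = a} := hX (measurableSet_singleton a)
  have hmb : MeasurableSet {ω | X ω = b} := hX (measurableSet_singleton b)
  have hsplit : (fun ω => f (X ω)) =ᵐ[P] fun ω =>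
      {ω | X ω = a}.indicator (fun _ => f a) ω + {ω | X ω = b}.indicator (fun _ => f b) ω := by
    filter_upwards [ae_eq_or_eq_of_measure_eq_ofReal hX hab hp0 hp1 ha hb] with ω hω
    rcases hω with h | h <;> simp [Set.indicator, h, hab, hab.symm]
  rw [integral_congr_ae hsplit, integral_add ((integrable_const _).indicator hma)
    ((integrable_const _).indicator hmb), integral_indicator_const _ hma,
    integral_indicator_const _ hmb, measureReal_def, measureReal_def, ha, hb,
    ENNReal.toReal_ofReal hp0, ENNReal.toReal_ofReal (by linarith), smul_eq_mul, smul_eq_mul]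

end TwoPoint

section BernoulliValues

variable {p : ℝ}

theorem bernoulliValues_ne (hp0 : 0 < p) (hp1 : p < 1) :
    √((1 - p) / p) ≠ -√(p / (1 - p)) := by
  have h₁ : 0 < √((1 - p) / p) := Real.sqrt_pos.2 (div_pos (by linarith) hp0)
  have h₂ : 0 < √(p / (1 - p)) := Real.sqrt_pos.2 (div_pos hp0 (by linarith))
  linarith

theorem bernoulliValues_mean (hp0 : 0 < p) (hp1 : p < 1) :
    p * √((1 - p) / p) + (1 - p) * -√(p / (1 - p)) = 0 := by
  have hsq : (p * √((1 - p) / p)) ^ 2 = ((1 - p) * √(p / (1 - p))) ^ 2 := by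
    rw [mul_pow, mul_pow, Real.sq_sqrt (div_pos (by linarith) hp0).le,
      Real.sq_sqrt (div_pos hp0 (by linarith)).le]
    field_simp
  have : 0 < 1 - p := by linarith
  rw [(sq_eq_sq₀ (by positivity) (by positivity)).1 hsq]
  ring

theorem bernoulliValues_second_moment (hp0 : 0 < p) (hp1 : p < 1) :
    p * (√((1 - p) / p) * √((1 - p) / p)) + (1 - p) * (-√(p / (1 - p)) * -√(p / (1 - p))) =
      1 := by
  rw [neg_mul_neg, Real.mul_self_sqrt (div_pos (by linarith) hp0).le,
    Real.mul_self_sqrt (div_pos hp0 (by linarith)).le]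
  have : 1 - p ≠ 0 := by linarith
  field_simp
  ring

end BernoulliValues

namespace IsBernoulliType

variable {Ω : Type*} [MeasurableSpace Ω] {P : Measure Ω} {m : ℕ} {p : ℝ}
  {C : Ω → Matrix (Fin m) (Fin m) ℝ}

theorem apply_inf_sup (hC : IsBernoulliType P p C) (ω : Ω) (i j : Fin m) :
    C ω (i ⊓ j) (i ⊔ j) = C ω i j := by
  rcases le_total i j with h | h
  · simp [h]
  · simp [h, (hC.1 ω).apply]

theorem measure_entry_eq (hC : IsBernoulliType P p C) (i j : Fin m) :
    P {ω | C ω i j = √((1 - p) / p)} = ENNReal.ofReal p ∧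
      P {ω | C ω i j = -√(p / (1 - p))} = ENNReal.ofReal (1 - p) := by
  simpa only [hC.apply_inf_sup] using hC.2.2.2 (i ⊓ j) (i ⊔ j) inf_le_sup

theorem indepFun_entry (hC : IsBernoulliType P p C) {i j k l : Fin m}
    (h : s(i, j) ≠ s(k, l)) : IndepFun (fun ω => C ω i j) (fun ω => C ω k l) P := by
  have hne : Sym2.sortEquiv s(i, j) ≠ Sym2.sortEquiv s(k, l) := Sym2.sortEquiv.injective.ne h
  simpa only [Sym2.sortEquiv_apply_coe, Sym2.inf_mk, Sym2.sup_mk, hC.apply_inf_sup]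
    using hC.2.2.1.indepFun hne

variable [IsProbabilityMeasure P]

theorem integral_comp_entry (hC : IsBernoulliType P p C) (hp0 : 0 < p) (hp1 : p < 1)
    (i j : Fin m) (f : ℝ → ℝ) :
    ∫ ω, f (C ω i j) ∂P = p * f √((1 - p) / p) + (1 - p) * f (-√(p / (1 - p))) :=
  integral_comp_of_measure_eq_ofReal (hC.2.1 i j) (bernoulliValues_ne hp0 hp1) hp0.le hp1.le
    (hC.measure_entry_eq i j).1 (hC.measure_entry_eq i j).2 f

theorem ae_abs_entry_le (hC : IsBernoulliType P p C) (hp0 : 0 < p) (hp1 : p < 1)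
    (i j : Fin m) : ∀ᵐ ω ∂P, |C ω i j| ≤ √((1 - p) / p) + √(p / (1 - p)) := by
  filter_upwards [ae_eq_or_eq_of_measure_eq_ofReal (hC.2.1 i j) (bernoulliValues_ne hp0 hp1)
    hp0.le hp1.le (hC.measure_entry_eq i j).1 (hC.measure_entry_eq i j).2] with ω hω
  rcases hω with h | h <;> rw [h] <;> simp [abs_of_nonneg (Real.sqrt_nonneg _)]

theorem integrable_entry_mul (hC : IsBernoulliType P p C) (hp0 : 0 < p) (hp1 : p < 1)
    (i j k l : Fin m) : Integrable (fun ω => C ω i j * C ω k l) P := by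
  refine Integrable.of_bound ((hC.2.1 i j).mul (hC.2.1 k l)).aestronglyMeasurable
    ((√((1 - p) / p) + √(p / (1 - p))) ^ 2) ?_
  filter_upwards [hC.ae_abs_entry_le hp0 hp1 i j, hC.ae_abs_entry_le hp0 hp1 k l] with ω h₁ h₂
  rw [Real.norm_eq_abs, abs_mul, sq]
  exact mul_le_mul h₁ h₂ (abs_nonneg _) (by positivity)

theorem integral_entry (hC : IsBernoulliType P p C) (hp0 : 0 < p) (hp1 : p < 1)
    (i j : Fin m) : ∫ ω, C ω i j ∂P = 0 :=
  (hC.integral_comp_entry hp0 hp1 i j id).trans (bernoulliValues_mean hp0 hp1)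

theorem integral_entry_mul_self (hC : IsBernoulliType P p C) (hp0 : 0 < p) (hp1 : p < 1)
    (i j : Fin m) : ∫ ω, C ω i j * C ω i j ∂P = 1 :=
  (hC.integral_comp_entry hp0 hp1 i j fun x => x * x).trans
    (bernoulliValues_second_moment hp0 hp1)

theorem orthonormalSymmEntries (hC : IsBernoulliType P p C) (hp0 : 0 < p) (hp1 : p < 1) :
    OrthonormalSymmEntries P C where
  integrable_mul := hC.integrable_entry_mul hp0 hp1
  integral_mul i j k l := by
    split_ifs with h
    · rcases Sym2.eq_iff.1 h with ⟨rfl, rfl⟩ | ⟨rfl, rfl⟩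
      · exact hC.integral_entry_mul_self hp0 hp1 i j
      · simpa only [fun ω => (hC.1 ω).apply i j] using
          hC.integral_entry_mul_self hp0 hp1 i j
    · rw [(hC.indepFun_entry h).integral_fun_mul_eq_mul_integral
        (hC.2.1 i j).aestronglyMeasurable (hC.2.1 k l).aestronglyMeasurable,
        hC.integral_entry hp0 hp1, zero_mul]

end IsBernoulliType

/-- Theorem 4 of the paper, first bound: variance bound for the
first-order residual `R E u₁`. -/
theorem variance_REu_bound
    {Ω : Type*} [MeasurableSpace Ω] (P : Measure Ω) [IsProbabilityMeasure P]
    {n : ℕ} (hn : 2 ≤ n)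
    (M : Matrix (Fin n) (Fin n) ℝ) (lam : Fin n → ℝ) (u : Fin n → Fin n → ℝ)
    (p : ℝ) (E : Ω → Matrix (Fin n) (Fin n) ℝ)
    (u1 : Fin n → ℝ) (lam1 lam2 : ℝ) (R : Matrix (Fin n) (Fin n) ℝ)
    (hsymm : M.IsSymm)
    (hunit : ∀ i, euclNorm (u i) = 1)
    (horth : ∀ i j : Fin n, i ≠ j → ∑ k, u i k * u j k = 0)
    (hsorted : StrictAnti lam)
    (hu1 : u1 = u ⟨0, by omega⟩)
    (hlam1 : lam1 = lam ⟨0, by omega⟩) (hlam2 : lam2 = lam ⟨1, by omega⟩)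
    (hR : R = ∑ j ∈ Finset.univ.erase (⟨0, by omega⟩ : Fin n),
      (lam j - lam1)⁻¹ • Matrix.vecMulVec (u j) (u j))
    (hp0 : 0 < p) (hp1 : p < 1)
    (hE : IsSubsampleResidual P p M E) :
    (∫ ω, (euclNorm ((R * E ω).mulVec u1)) ^ 2 ∂P) ≤
      (1 / (lam2 - lam1) ^ 2) * ((1 - p) / p) *
        ((∑ k, (u1 k) ^ 2 * ∑ i, (M i k) ^ 2) -
          (2 * (∑ i, ∑ j, (u1 i) ^ 2 * (M i j) ^ 2 * (u1 j) ^ 2) -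
            ∑ k, ((u1 k) ^ 2) ^ 2 * (M k k) ^ 2)) := by
  obtain ⟨C, hC, hEC⟩ := hE
  have hW := hC.orthonormalSymmEntries hp0 hp1
  have hδ : 0 < lam ⟨0, by omega⟩ - lam ⟨1, by omega⟩ :=
    sub_pos.2 (hsorted (Fin.mk_lt_mk.2 one_pos))
  have hpt (ω : Ω) : euclNorm ((R * E ω) *ᵥ u1) ^ 2 ≤
      ((lam1 - lam2) ^ 2)⁻¹ * √((1 - p) / p) ^ 2 *
        ((M ⊙ C ω) *ᵥ u1 ⬝ᵥ (M ⊙ C ω) *ᵥ u1 - (u1 ⬝ᵥ (M ⊙ C ω) *ᵥ u1) ^ 2) := by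
    rw [hEC ω, hR, hu1, hlam1, hlam2]
    exact euclNorm_reducedResolvent_mul_smul_mulVec_sq_le (of_mul_transpose_eq_one hunit horth)
      hδ (fun j hj => hsorted.sub_le_abs_sub_of_ne_zero (by omega) hj) _ _
  calc ∫ ω, euclNorm ((R * E ω) *ᵥ u1) ^ 2 ∂P
      ≤ ∫ ω, ((lam1 - lam2) ^ 2)⁻¹ * √((1 - p) / p) ^ 2 *
          ((M ⊙ C ω) *ᵥ u1 ⬝ᵥ (M ⊙ C ω) *ᵥ u1 - (u1 ⬝ᵥ (M ⊙ C ω) *ᵥ u1) ^ 2) ∂P :=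
        integral_mono_of_nonneg (ae_of_all _ fun _ => sq_nonneg _)
          (((hW.integrable_hadamard_mulVec_dotProduct_self M u1).sub
            (hW.integrable_sq_dotProduct_hadamard_mulVec M u1)).const_mul _) (ae_of_all _ hpt)
    _ = _ := by
      rw [integral_const_mul, integral_sub (hW.integrable_hadamard_mulVec_dotProduct_self M u1)
        (hW.integrable_sq_dotProduct_hadamard_mulVec M u1),
        hW.integral_hadamard_mulVec_dotProduct_self,
        hW.integral_sq_dotProduct_hadamard_mulVec hsymm,
        Real.sq_sqrt (div_pos (by linarith) hp0).le, one_div, ← neg_sub lam1, neg_sq]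
end
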